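/- arXiv:0804.4629 — 3 statements merged into one kernel-verified Lean document; each statement's English description precedes it below -/
import Mathlib

section
/- Let ι, σ : X¹ → X⁰ be an expanding system with expansion constant λ > 1, and let the lengths of connecting paths of a homotopy pseudo-orbit (x, α) be bounded by C. Define inductively α⁰ᵢ = αᵢ, and αⁿ⁺¹ᵢ = ι(βⁿᵢ), where βⁿᵢ₋₁ is the unique lift of αⁿᵢ through the covering σ with βⁿᵢ₋₁(0) = xⁿᵢ₋₁ (and xⁿ⁺¹ᵢ = βⁿᵢ(1)). Then l⁰(αⁿᵢ) ≤ C/λⁿ for all n ≥ 0 and all i. -/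
open scoped unitInterval ENNReal

/-- The arc length of a continuous curve `[0,1] → X` in a metric space. -/
noncomputable def curveLength {X : Type*} [MetricSpace X] (γ : C(I, X)) : ℝ≥0∞ :=
  eVariationOn (fun t : I => γ t) Set.univ

/-- `X` is a length space: the distance between two points is approximated by lengths
of paths joining them. -/
def IsLengthSpace (X : Type*) [MetricSpace X] : Prop :=
  ∀ (x y : X) (ε : ℝ), 0 < ε →
    ∃ γ : Path x y, curveLength γ.toContinuousMap ≤ ENNReal.ofReal (dist x y + ε)

/-- Key local estimate: if `σ` expands `ι`-distances by `lam` at scale `δ`, then for any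
continuous `β : I → X1` and `a ≤ b` in `I`,
`lam * edist (ι (β a)) (ι (β b)) ≤ eVariationOn (σ ∘ β) (univ ∩ [a,b])`. -/
private lemma chain_estimate {X0 X1 : Type*} [MetricSpace X0] [MetricSpace X1]
    (ιX σX : C(X1, X0)) (δ lam : ℝ) (hδ : 0 < δ) (hlam0 : 0 ≤ lam)
    (hexp : ∀ x y : X1, dist x y < δ → lam * dist (ιX x) (ιX y) ≤ dist (σX x) (σX y))
    (β : C(I, X1)) (a b : I) (hab : a ≤ b) :
    ENNReal.ofReal lam * edist (ιX (β a)) (ιX (β b)) ≤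
      eVariationOn (fun t : I => σX (β t)) (Set.univ ∩ Set.Icc a b) := by
  obtain ⟨ε, hε, hβ⟩ := Metric.uniformContinuous_iff.mp
    (CompactSpace.uniformContinuous_of_continuous β.continuous) δ hδ
  obtain ⟨m', hm'⟩ := exists_nat_one_div_lt hε
  set m : ℕ := m' + 1 with hmdef
  have hmpos : (0:ℝ) < m := by positivity
  have hab' : (a:ℝ) ≤ b := hab
  have hba1 : (b:ℝ) - a ≤ 1 := by
    have h1 := b.2.2
    have h2 := a.2.1
    linarith
  -- the subdivision points
  have hmem : ∀ k : ℕ, (a:ℝ) + (min k m : ℕ) * ((b:ℝ) - a) / m ∈ I := by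
    intro k
    have h2 : (0:ℝ) ≤ (b:ℝ) - a := sub_nonneg.mpr hab'
    have h0 : (0:ℝ) ≤ (min k m : ℕ) * ((b:ℝ) - a) / m := by
      apply div_nonneg _ hmpos.le
      exact mul_nonneg (Nat.cast_nonneg _) h2
    have h1 : ((min k m : ℕ) : ℝ) * ((b:ℝ) - a) / m ≤ (b:ℝ) - a := by
      rw [div_le_iff₀ hmpos]
      have : ((min k m : ℕ) : ℝ) ≤ m := by exact_mod_cast Nat.min_le_right k m
      nlinarith
    constructor
    · have := a.2.1; linarith
    · have := b.2.2; linarith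
  set u : ℕ → I := fun k => ⟨(a:ℝ) + (min k m : ℕ) * ((b:ℝ) - a) / m, hmem k⟩ with hu
  have hu0 : u 0 = a := by
    apply Subtype.ext; simp [hu]
  have hum : u m = b := by
    apply Subtype.ext
    simp only [hu, min_self]
    field_simp
    ring
  have humono : Monotone u := by
    intro i j hij
    rw [hu, ← Subtype.coe_le_coe]
    simp only
    have h1 : ((min i m : ℕ) : ℝ) ≤ (min j m : ℕ) := by
      exact_mod_cast min_le_min hij (le_refl m)
    have h2 : (0:ℝ) ≤ (b:ℝ) - a := sub_nonneg.mpr hab'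
    have h3 : ((min i m : ℕ) : ℝ) * ((b:ℝ) - a) / m ≤ ((min j m : ℕ) : ℝ) * ((b:ℝ) - a) / m :=
      (div_le_div_iff_of_pos_right hmpos).mpr (mul_le_mul_of_nonneg_right h1 h2)
    linarith
  have hIcc : ∀ k, u k ∈ Set.Icc a b := by
    intro k
    constructor
    · rw [← hu0]; exact humono (Nat.zero_le k)
    · have : u k ≤ u m := by
        rcases le_total k m with h | h
        · exact humono h
        · have : u k = u m := by
            apply Subtype.ext
            simp [hu, min_eq_right h, min_eq_right (Nat.cast_le.mpr h : (m:ℝ) ≤ k), hmpos.ne']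
          exact this.le
      rwa [hum] at this
  have hstep : ∀ k : ℕ, dist (β (u (k+1))) (β (u k)) < δ := by
    intro k
    apply hβ
    rw [Subtype.dist_eq]
    simp only [hu]
    have hmin : ((min (k+1) m : ℕ) : ℝ) - (min k m : ℕ) ≤ 1 := by
      rcases le_or_gt (k+1) m with h | h
      · rw [min_eq_left h, min_eq_left (Nat.le_of_succ_le h)]
        push_cast; linarith
      · rw [min_eq_right (by omega : m ≤ k+1), min_eq_right (by omega : m ≤ k)]
        simp
    have hmin0 : ((min k m : ℕ) : ℝ) ≤ (min (k+1) m : ℕ) := by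
      exact_mod_cast min_le_min (Nat.le_succ k) (le_refl m)
    have h2 : (0:ℝ) ≤ (b:ℝ) - a := sub_nonneg.mpr hab'
    have hdiv : ((min k m : ℕ) : ℝ) * ((b:ℝ) - a) / m ≤
        ((min (k+1) m : ℕ) : ℝ) * ((b:ℝ) - a) / m :=
      (div_le_div_iff_of_pos_right hmpos).mpr (mul_le_mul_of_nonneg_right hmin0 h2)
    have key : |(a:ℝ) + (min (k+1) m : ℕ) * ((b:ℝ) - a) / m -
        ((a:ℝ) + (min k m : ℕ) * ((b:ℝ) - a) / m)| ≤ 1 / m := by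
      rw [abs_of_nonneg (by linarith)]
      have heq : (a:ℝ) + (min (k+1) m : ℕ) * ((b:ℝ) - a) / m -
          ((a:ℝ) + (min k m : ℕ) * ((b:ℝ) - a) / m) =
          (((min (k+1) m : ℕ) : ℝ) - (min k m : ℕ)) * ((b:ℝ) - a) / m := by ring
      rw [heq]
      refine (div_le_div_iff_of_pos_right hmpos).mpr ?_
      nlinarith
    calc |(a:ℝ) + (min (k+1) m : ℕ) * ((b:ℝ) - a) / m -
        ((a:ℝ) + (min k m : ℕ) * ((b:ℝ) - a) / m)| ≤ 1 / m := key
      _ < ε := by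
          rw [hmdef]
          push_cast
          exact hm'
  calc ENNReal.ofReal lam * edist (ιX (β a)) (ιX (β b))
      = ENNReal.ofReal lam * edist (ιX (β (u 0))) (ιX (β (u m))) := by rw [hu0, hum]
    _ ≤ ENNReal.ofReal lam *
        ∑ i ∈ Finset.range m, edist (ιX (β (u i))) (ιX (β (u (i+1)))) := by
        gcongr
        exact edist_le_range_sum_edist (fun k => ιX (β (u k))) m
    _ = ∑ i ∈ Finset.range m,
        ENNReal.ofReal lam * edist (ιX (β (u i))) (ιX (β (u (i+1)))) := by
        rw [Finset.mul_sum]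
    _ ≤ ∑ i ∈ Finset.range m, edist (σX (β (u (i+1)))) (σX (β (u i))) := by
        refine Finset.sum_le_sum fun i _ => ?_
        rw [edist_dist, edist_dist, ← ENNReal.ofReal_mul hlam0]
        refine ENNReal.ofReal_le_ofReal ?_
        rw [dist_comm (σX (β (u (i+1))))]
        exact hexp _ _ (by rw [dist_comm]; exact hstep i)
    _ ≤ eVariationOn (fun t : I => σX (β t)) (Set.univ ∩ Set.Icc a b) :=
        eVariationOn.sum_le humono (fun i => ⟨trivial, hIcc i⟩)

/-- Summation of the local estimate over a partition. -/
private lemma evar_contract {X0 X1 : Type*} [MetricSpace X0] [MetricSpace X1]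
    (ιX σX : C(X1, X0)) (δ lam : ℝ) (hδ : 0 < δ) (hlam0 : 0 ≤ lam)
    (hexp : ∀ x y : X1, dist x y < δ → lam * dist (ιX x) (ιX y) ≤ dist (σX x) (σX y))
    (β : C(I, X1)) :
    eVariationOn (fun t : I => ιX (β t)) Set.univ * ENNReal.ofReal lam ≤
      eVariationOn (fun t : I => σX (β t)) Set.univ := by
  rw [eVariationOn, ENNReal.iSup_mul]
  refine iSup_le ?_
  rintro ⟨n, u, hu, -⟩
  simp only [Finset.sum_mul]
  have key : ∀ k : ℕ,
      ∑ i ∈ Finset.range k,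
        edist (ιX (β (u (i+1)))) (ιX (β (u i))) * ENNReal.ofReal lam ≤
      eVariationOn (fun t : I => σX (β t)) (Set.univ ∩ Set.Icc (u 0) (u k)) := by
    intro k
    induction k with
    | zero => simp
    | succ k ih =>
        rw [Finset.sum_range_succ]
        have hstep : edist (ιX (β (u (k+1)))) (ιX (β (u k))) * ENNReal.ofReal lam ≤
            eVariationOn (fun t : I => σX (β t)) (Set.univ ∩ Set.Icc (u k) (u (k+1))) := by
          rw [mul_comm, edist_comm]
          exact chain_estimate ιX σX δ lam hδ hlam0 hexp β (u k) (u (k+1))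
            (hu (Nat.le_succ k))
        calc _ ≤ eVariationOn (fun t : I => σX (β t)) (Set.univ ∩ Set.Icc (u 0) (u k)) +
              eVariationOn (fun t : I => σX (β t)) (Set.univ ∩ Set.Icc (u k) (u (k+1))) :=
              add_le_add ih hstep
          _ = _ := eVariationOn.Icc_add_Icc _ (hu (Nat.zero_le k)) (hu (Nat.le_succ k))
              trivial
  exact (key n).trans (eVariationOn.mono _ Set.inter_subset_left)

/-- Geometric decay of the connecting paths in the homotopy shadowing construction for
expanding systems: with `α⁰ᵢ = αᵢ` the connecting paths of a homotopy pseudo-orbit of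
length `≤ C`, `βⁿᵢ₋₁` the lift of `αⁿᵢ` through the covering `σ` starting at `xⁿᵢ₋₁`,
and `αⁿ⁺¹ᵢ = ι(βⁿᵢ)`, one has `l⁰(αⁿᵢ) ≤ C/λⁿ` for all `n` and `i`. -/
theorem connecting_paths_decay {X0 X1 : Type*}
    [MetricSpace X0] [MetricSpace X1] [CompleteSpace X0] [CompleteSpace X1]
    (hLen0 : IsLengthSpace X0) (hLen1 : IsLengthSpace X1)
    (ιX σX : C(X1, X0)) (δ lam : ℝ) (hδ : 0 < δ) (hlam : 1 < lam)
    (hexp : ∀ x y : X1, dist x y < δ → lam * dist (ιX x) (ιX y) ≤ dist (σX x) (σX y))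
    (hcov : IsCoveringMap σX)
    (x : ℕ → ℕ → X1) (α : ℕ → ℕ → C(I, X0)) (β : ℕ → ℕ → C(I, X1)) (C : ℝ)
    (hx0 : ∀ n i, α n (i + 1) 0 = σX (x n i))
    (hx1 : ∀ n i, α n i 1 = ιX (x n i))
    (hlift : ∀ n i, σX.comp (β n i) = α n (i + 1))
    (hlift0 : ∀ n i, β n i 0 = x n i)
    (hnext : ∀ n i, α (n + 1) i = ιX.comp (β n i))
    (hxnext : ∀ n i, x (n + 1) i = β n i 1)
    (hC : ∀ i, 1 ≤ i → curveLength (α 0 i) ≤ ENNReal.ofReal C) :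
    ∀ n i, 1 ≤ i → curveLength (α n i) ≤ ENNReal.ofReal (C / lam ^ n) := by
  have hlam0 : (0:ℝ) < lam := lt_trans one_pos hlam
  intro n
  induction n with
  | zero =>
      intro i hi
      simpa using hC i hi
  | succ n ih =>
      intro i hi
      have hcontract := evar_contract ιX σX δ lam hδ hlam0.le hexp (β n i)
      have hσ : eVariationOn (fun t : I => σX (β n i t)) Set.univ =
          curveLength (α n (i+1)) := by
        rw [← hlift n i]; rfl
      have hι : curveLength (α (n+1) i) =
          eVariationOn (fun t : I => ιX (β n i t)) Set.univ := by
        rw [hnext n i]; rfl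
      rw [hσ] at hcontract
      rw [hι]
      have hbound : curveLength (α n (i+1)) ≤ ENNReal.ofReal (C / lam ^ n) :=
        ih (i+1) (by omega)
      have hne0 : ENNReal.ofReal lam ≠ 0 := by
        simp [ENNReal.ofReal_eq_zero, not_le, hlam0]
      have hnetop : ENNReal.ofReal lam ≠ ⊤ := ENNReal.ofReal_ne_top
      rw [← ENNReal.le_div_iff_mul_le (Or.inl hne0) (Or.inl hnetop)] at hcontract
      refine hcontract.trans ?_
      rw [ENNReal.div_le_iff hne0 hnetop]
      calc curveLength (α n (i+1)) ≤ ENNReal.ofReal (C / lam ^ n) := hbound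
        _ = ENNReal.ofReal (C / lam ^ (n+1)) * ENNReal.ofReal lam := by
            rw [← ENNReal.ofReal_mul' hlam0.le]
            congr 1
            field_simp
            ring
end

section
/- Let (M⁰ₓ × M⁰ᵧ, M¹ₓ × M¹ᵧ; ι, f) be a hyperbolic system, and for y₀ ∈ M¹ᵧ define σ_{y₀} = π⁰ₓ ∘ f ∘ τ_{y₀} and ι_{y₀} = π⁰ₓ ∘ ι ∘ τ_{y₀} : M¹ₓ → M⁰ₓ, where τ_{y₀}(x) = (x, y₀). Then for any y₀, y₁ ∈ M¹ᵧ, the associated expanding systems (M⁰ₓ, M¹ₓ; ι_{y₀}, σ_{y₀}) and (M⁰ₓ, M¹ₓ; ι_{y₁}, σ_{y₁}) are homotopy equivalent as multivalued dynamical systems. -/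
open scoped Manifold

section HSCDefs

variable {X0 X1 Y0 Y1 Z0 Z1 : Type*} [TopologicalSpace X0] [TopologicalSpace X1]
  [TopologicalSpace Y0] [TopologicalSpace Y1] [TopologicalSpace Z0] [TopologicalSpace Z1]

/-- A homotopy semi-conjugacy `h = (h⁰, h¹; G, H)` from the multivalued dynamical
system `(X⁰, X¹; ι, f)` to `(Y⁰, Y¹; ι, g)`: maps `h⁰, h¹` together with homotopies
`G : h⁰∘f ≃ g∘h¹` and `H : h⁰∘ι ≃ ι∘h¹`. -/
structure HSC (ιX f : C(X1, X0)) (ιY g : C(Y1, Y0)) where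
  h0 : C(X0, Y0)
  h1 : C(X1, Y1)
  G : ContinuousMap.Homotopy (h0.comp f) (g.comp h1)
  H : ContinuousMap.Homotopy (h0.comp ιX) (ιY.comp h1)

/-- The identity homotopy semi-conjugacy of `(X⁰, X¹; ι, f)`. -/
def HSC.ident (ιX f : C(X1, X0)) : HSC ιX f ιX f :=
  ⟨ContinuousMap.id X0, ContinuousMap.id X1,
    ContinuousMap.Homotopy.refl f, ContinuousMap.Homotopy.refl ιX⟩

/-- Composition `kh` of homotopy semi-conjugacies, with homotopies
`k⁰G · G'h¹` and `k⁰H · H'h¹`. -/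
noncomputable def HSC.comp {ιX f : C(X1, X0)} {ιY g : C(Y1, Y0)} {ιZ gz : C(Z1, Z0)}
    (k : HSC ιY g ιZ gz) (h : HSC ιX f ιY g) : HSC ιX f ιZ gz where
  h0 := k.h0.comp h.h0
  h1 := k.h1.comp h.h1
  G := ((ContinuousMap.Homotopy.refl k.h0).comp h.G).trans (k.G.compContinuousMap h.h1)
  H := ((ContinuousMap.Homotopy.refl k.h0).comp h.H).trans (k.H.compContinuousMap h.h1)

/-- A homotopy `(T, S)` between two homotopy semi-conjugacies `h, k`: homotopies
`S : h¹ ≃ k¹`, `T : h⁰ ≃ k⁰` such that (i) `gS(x)·G'(x)⁻¹` is path-homotopic to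
`G(x)⁻¹·Tf(x)` and (ii) `H(x)·ιS(x)` is path-homotopic to `Tι(x)·H'(x)`. -/
structure HSCHomotopy {ιX f : C(X1, X0)} {ιY g : C(Y1, Y0)} (h k : HSC ιX f ιY g) where
  S : ContinuousMap.Homotopy h.h1 k.h1
  T : ContinuousMap.Homotopy h.h0 k.h0
  cond1 : ∀ x : X1,
    (((S.evalAt x).map g.continuous).trans (k.G.evalAt x).symm).Homotopic
      ((h.G.evalAt x).symm.trans (T.evalAt (f x)))
  cond2 : ∀ x : X1,
    ((h.H.evalAt x).trans ((S.evalAt x).map ιY.continuous)).Homotopic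
      ((T.evalAt (ιX x)).trans (k.H.evalAt x))

/-- Two multivalued dynamical systems are homotopy equivalent if there are homotopy
semi-conjugacies in both directions whose compositions are homotopic to the identity
semi-conjugacies. -/
def MVHomotopyEquiv (ιX f : C(X1, X0)) (ιY g : C(Y1, Y0)) : Prop :=
  ∃ (h : HSC ιX f ιY g) (k : HSC ιY g ιX f),
    Nonempty (HSCHomotopy (k.comp h) (HSC.ident ιX f)) ∧
    Nonempty (HSCHomotopy (h.comp k) (HSC.ident ιY g))

end HSCDefs

/-- The open horizontal cone at `p`. -/
def coneH {Ex Ey M0x M0y : Type*} (nx : M0x → Ex → ℝ) (ny : M0y → Ey → ℝ)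
    (p : M0x × M0y) : Set (Ex × Ey) :=
  {v | ny p.2 v.2 < nx p.1 v.1}

/-- The open vertical cone at `p`. -/
def coneV {Ex Ey M0x M0y : Type*} (nx : M0x → Ex → ℝ) (ny : M0y → Ey → ℝ)
    (p : M0x × M0y) : Set (Ex × Ey) :=
  {v | nx p.1 v.1 < ny p.2 v.2}

section PathAux

variable {α : Type*} [TopologicalSpace α]

private lemma trans_symm_homotopic_refl {a b : α} (P : Path a b) :
    (P.trans P.symm).Homotopic (Path.refl a) :=
  ⟨(Path.Homotopy.reflTransSymm P).symm⟩

private lemma path_homotopic_master1 {a b : α} (P : Path a b) {p q r s : Path a a}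
    (hp : p = Path.refl a) (hq : q = Path.refl a) (hr : r = P.trans P.symm)
    (hs : s = Path.refl a) :
    (p.trans q.symm).Homotopic (r.symm.trans s) := by
  subst hp; subst hq; subst hr; subst hs
  have h1 : ((Path.refl a).trans (Path.refl a).symm).Homotopic (Path.refl a) := by
    rw [Path.refl_symm]; exact ⟨Path.Homotopy.transRefl _⟩
  have h2 : ((P.trans P.symm).symm).Homotopic (Path.refl a) := by
    have h2' : ((P.trans P.symm).symm).Homotopic ((Path.refl a).symm) :=
      ⟨(Path.Homotopy.reflTransSymm P).symm.symm₂⟩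
    rwa [Path.refl_symm] at h2'
  have h3 : (((P.trans P.symm).symm).trans (Path.refl a)).Homotopic (Path.refl a) :=
    (Path.Homotopic.hcomp h2 (Path.Homotopic.refl _)).trans ⟨Path.Homotopy.transRefl _⟩
  exact h1.trans h3.symm

private lemma path_homotopic_master2 {a b : α} (P : Path a b) {p q r s : Path a a}
    (hp : p = Path.refl a) (hq : q = Path.refl a) (hr : r = P.trans P.symm)
    (hs : s = Path.refl a) :
    (r.trans p).Homotopic (q.trans s) := by
  subst hp; subst hq; subst hr; subst hs
  have h1 : ((P.trans P.symm).trans (Path.refl a)).Homotopic (Path.refl a) :=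
    (Path.Homotopic.hcomp (trans_symm_homotopic_refl P) (Path.Homotopic.refl _)).trans
      ⟨Path.Homotopy.transRefl _⟩
  have h2 : ((Path.refl a).trans (Path.refl a)).Homotopic (Path.refl a) :=
    ⟨Path.Homotopy.transRefl _⟩
  exact h1.trans h2.symm

end PathAux

/-- For a hyperbolic system `(M⁰ₓ × M⁰ᵧ, M¹ₓ × M¹ᵧ; ι, f)`, the associated expanding
systems `(M⁰ₓ, M¹ₓ; ι_{y₀}, σ_{y₀})` and `(M⁰ₓ, M¹ₓ; ι_{y₁}, σ_{y₁})` obtained from any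
two basepoints `y₀, y₁ ∈ M¹ᵧ` (where `σ_y = π⁰ₓ∘f∘τ_y` and `ι_y = π⁰ₓ∘ι∘τ_y`, with
`τ_y(x) = (x, y)`) are homotopy equivalent as multivalued dynamical systems. -/
theorem associated_expanding_systems_homotopyEquiv
    {Ex Ey : Type*} [NormedAddCommGroup Ex] [NormedSpace ℝ Ex]
    [NormedAddCommGroup Ey] [NormedSpace ℝ Ey]
    {Hx Hy : Type*} [TopologicalSpace Hx] [TopologicalSpace Hy]
    (Ix : ModelWithCorners ℝ Ex Hx) (Iy : ModelWithCorners ℝ Ey Hy)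
    {M0x M0y M1x M1y : Type*} [TopologicalSpace M0x] [ChartedSpace Hx M0x]
    [IsManifold Ix (⊤ : ℕ∞) M0x] [TopologicalSpace M0y] [ChartedSpace Hy M0y]
    [IsManifold Iy (⊤ : ℕ∞) M0y] [TopologicalSpace M1x] [ChartedSpace Hx M1x]
    [IsManifold Ix (⊤ : ℕ∞) M1x] [TopologicalSpace M1y] [ChartedSpace Hy M1y]
    [IsManifold Iy (⊤ : ℕ∞) M1y]
    [CompactSpace M0x] [CompactSpace M0y] [ConnectedSpace M0x] [ConnectedSpace M0y]
    [SimplyConnectedSpace M0y]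
    [ConnectedSpace M1y] [LocallyPathConnectedSpace M1y]
    (nx : M0x → Ex → ℝ) (ny : M0y → Ey → ℝ)
    (ι f : C(M1x × M1y, M0x × M0y))
    (hι : ContMDiff (Ix.prod Iy) (Ix.prod Iy) (⊤ : ℕ∞) ⇑ι)
    (hf : ContMDiff (Ix.prod Iy) (Ix.prod Iy) (⊤ : ℕ∞) ⇑f)
    (hιinj : Function.Injective ι) (hfinj : Function.Injective f)
    (d : ℕ) (hproper : IsProperMap (fun p : M1x × M1y => ((f p).1, (ι p).2)))
    (hdeg : ∀ q : M0x × M0y,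
      Nat.card {p : M1x × M1y // ((f p).1, (ι p).2) = q} = d)
    (lam : ℝ) (hlam : 1 < lam)
    (hexp : ∀ p : M1x × M1y, ∀ v : Ex × Ey,
      (mfderiv (Ix.prod Iy) (Ix.prod Iy) ι p v : Ex × Ey) ∈ coneH nx ny (ι p) →
      ((mfderiv (Ix.prod Iy) (Ix.prod Iy) f p v : Ex × Ey) ∈ coneH nx ny (f p) ∧
        lam * nx (ι p).1 ((mfderiv (Ix.prod Iy) (Ix.prod Iy) ι p v : Ex × Ey)).1 ≤
          nx (f p).1 ((mfderiv (Ix.prod Iy) (Ix.prod Iy) f p v : Ex × Ey)).1))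
    (hcontr : ∀ p : M1x × M1y, ∀ v : Ex × Ey,
      (mfderiv (Ix.prod Iy) (Ix.prod Iy) f p v : Ex × Ey) ∈ coneV nx ny (f p) →
      ((mfderiv (Ix.prod Iy) (Ix.prod Iy) ι p v : Ex × Ey) ∈ coneV nx ny (ι p) ∧
        lam * ny (f p).2 ((mfderiv (Ix.prod Iy) (Ix.prod Iy) f p v : Ex × Ey)).2 ≤
          ny (ι p).2 ((mfderiv (Ix.prod Iy) (Ix.prod Iy) ι p v : Ex × Ey)).2))
    (y0 y1 : M1y)
    (σ0 ι0 σ1 ι1 : C(M1x, M0x))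
    (hσ0 : ∀ x : M1x, σ0 x = (f (x, y0)).1) (hι0 : ∀ x : M1x, ι0 x = (ι (x, y0)).1)
    (hσ1 : ∀ x : M1x, σ1 x = (f (x, y1)).1) (hι1 : ∀ x : M1x, ι1 x = (ι (x, y1)).1) :
    MVHomotopyEquiv ι0 σ0 ι1 σ1 := by
  have hpc : PathConnectedSpace M1y := pathConnectedSpace_iff_connectedSpace.mpr ‹_›
  obtain ⟨γ⟩ : Joined y0 y1 := hpc.joined y0 y1
  let Gh : ContinuousMap.Homotopy σ0 σ1 :=
    { toFun := fun p => (f (p.2, γ p.1)).1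
      continuous_toFun := by fun_prop
      map_zero_left := fun x => by simp [hσ0 x]
      map_one_left := fun x => by simp [hσ1 x] }
  let Hh : ContinuousMap.Homotopy ι0 ι1 :=
    { toFun := fun p => (ι (p.2, γ p.1)).1
      continuous_toFun := by fun_prop
      map_zero_left := fun x => by simp [hι0 x]
      map_one_left := fun x => by simp [hι1 x] }
  let h : HSC ι0 σ0 ι1 σ1 := ⟨ContinuousMap.id _, ContinuousMap.id _, Gh, Hh⟩
  let k : HSC ι1 σ1 ι0 σ0 := ⟨ContinuousMap.id _, ContinuousMap.id _, Gh.symm, Hh.symm⟩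
  refine ⟨h, k,
    ⟨⟨ContinuousMap.Homotopy.refl _, ContinuousMap.Homotopy.refl _,
      fun x => ?_, fun x => ?_⟩⟩,
    ⟨⟨ContinuousMap.Homotopy.refl _, ContinuousMap.Homotopy.refl _,
      fun x => ?_, fun x => ?_⟩⟩⟩
  · refine path_homotopic_master1 (Gh.evalAt x) ?_ ?_ ?_ ?_
    · ext t
      rfl
    · ext t
      rfl
    · ext t
      simp only [HSC.comp, ContinuousMap.Homotopy.trans_apply, Path.trans_apply,
        ContinuousMap.Homotopy.evalAt, ContinuousMap.Homotopy.comp,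
        ContinuousMap.Homotopy.compContinuousMap, ContinuousMap.Homotopy.symm,
        Path.symm, Path.coe_mk_mk, ContinuousMap.coe_mk, h, k]
      show (if (t : ℝ) ≤ 1 / 2 then _ else _) = if (t : ℝ) ≤ 1 / 2 then _ else _
      split_ifs <;> first
        | rfl
        | exact congrArg (fun s => (f (x, γ s)).1) (unitInterval.symm_symm _).symm
        | exact congrArg (fun s => (ι (x, γ s)).1) (unitInterval.symm_symm _).symm
    · ext t
      rfl
  · refine path_homotopic_master2 (Hh.evalAt x) ?_ ?_ ?_ ?_
    · ext t
      rfl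
    · ext t
      rfl
    · ext t
      simp only [HSC.comp, ContinuousMap.Homotopy.trans_apply, Path.trans_apply,
        ContinuousMap.Homotopy.evalAt, ContinuousMap.Homotopy.comp,
        ContinuousMap.Homotopy.compContinuousMap, ContinuousMap.Homotopy.symm,
        Path.symm, Path.coe_mk_mk, ContinuousMap.coe_mk, h, k]
      show (if (t : ℝ) ≤ 1 / 2 then _ else _) = if (t : ℝ) ≤ 1 / 2 then _ else _
      split_ifs <;> first
        | rfl
        | exact congrArg (fun s => (f (x, γ s)).1) (unitInterval.symm_symm _).symm
        | exact congrArg (fun s => (ι (x, γ s)).1) (unitInterval.symm_symm _).symm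
    · ext t
      rfl
  · refine path_homotopic_master1 (Gh.symm.evalAt x) ?_ ?_ ?_ ?_
    · ext t
      rfl
    · ext t
      rfl
    · ext t
      simp only [HSC.comp, ContinuousMap.Homotopy.trans_apply, Path.trans_apply,
        ContinuousMap.Homotopy.evalAt, ContinuousMap.Homotopy.comp,
        ContinuousMap.Homotopy.compContinuousMap, ContinuousMap.Homotopy.symm,
        Path.symm, Path.coe_mk_mk, ContinuousMap.coe_mk, unitInterval.symm_symm, h, k]
      show (if (t : ℝ) ≤ 1 / 2 then _ else _) = if (t : ℝ) ≤ 1 / 2 then _ else _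
      split_ifs <;> first
        | rfl
        | exact congrArg (fun s => (f (x, γ s)).1) (unitInterval.symm_symm _).symm
        | exact congrArg (fun s => (ι (x, γ s)).1) (unitInterval.symm_symm _).symm
    · ext t
      rfl
  · refine path_homotopic_master2 (Hh.symm.evalAt x) ?_ ?_ ?_ ?_
    · ext t
      rfl
    · ext t
      rfl
    · ext t
      simp only [HSC.comp, ContinuousMap.Homotopy.trans_apply, Path.trans_apply,
        ContinuousMap.Homotopy.evalAt, ContinuousMap.Homotopy.comp,
        ContinuousMap.Homotopy.compContinuousMap, ContinuousMap.Homotopy.symm,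
        Path.symm, Path.coe_mk_mk, ContinuousMap.coe_mk, unitInterval.symm_symm, h, k]
      show (if (t : ℝ) ≤ 1 / 2 then _ else _) = if (t : ℝ) ≤ 1 / 2 then _ else _
      split_ifs <;> first
        | rfl
        | exact congrArg (fun s => (f (x, γ s)).1) (unitInterval.symm_symm _).symm
        | exact congrArg (fun s => (ι (x, γ s)).1) (unitInterval.symm_symm _).symm
    · ext t
      rfl
end

section
/- Let 𝒳 = (M⁰ₓ × M⁰ᵧ, M¹ₓ × M¹ᵧ; ι, f) be a hyperbolic system in which M⁰ᵧ and M¹ᵧ are contractible, and let 𝒴 = (M⁰ₓ, M¹ₓ; ι, σ) be its associated expanding system, where σ = π⁰ₓ ∘ f ∘ τ¹ with τ¹(x) = (x, y¹) for a fixed basepoint y¹ ∈ M¹ᵧ. Then 𝒳 and 𝒴 are homotopy equivalent as multivalued dynamical systems, via the projections (π⁰ₓ, π¹ₓ) in one direction and the inclusions (τ⁰, τ¹) in the other (with appropriate homotopies built from a contraction Uⁿₜ(x, y) = (x, uⁿₜ(y)) of Mⁿᵧ to yⁿ). -/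
open scoped Manifold

section MVAux

open ContinuousMap unitInterval

variable {A B C D : Type*} [TopologicalSpace A] [TopologicalSpace B]
  [TopologicalSpace C] [TopologicalSpace D]

/-- Inclusion at a basepoint. -/
def MVincl (b : B) : C(A, A × B) := (ContinuousMap.id A).prodMk (ContinuousMap.const A b)

/-- The associated expanding-system map `π ∘ f ∘ τ`. -/
def MVsigma (fCM : C(A × B, C × D)) (y1 : B) : C(A, C) :=
  ContinuousMap.fst.comp (fCM.comp (MVincl y1))

lemma MV_exists_contraction (Z : Type*) [TopologicalSpace Z] [ContractibleSpace Z] (z : Z) :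
    Nonempty ((ContinuousMap.id Z).Homotopy (ContinuousMap.const Z z)) := by
  obtain ⟨c, ⟨H⟩⟩ := id_nullhomotopic Z
  exact ⟨H.trans (PathConnectedSpace.somePath c z).toHomotopyConst⟩

lemma MVsymm2 {x y : C} {p q : Path x y} (h : p.Homotopic q) :
    p.symm.Homotopic q.symm :=
  ⟨h.some.symm₂⟩

lemma MVpath_homotopic_of_proj {c₁ c₂ : C × D} {p q : Path c₁ c₂}
    (h1 : (p.map continuous_fst).Homotopic (q.map continuous_fst))
    (h2 : (p.map continuous_snd).Homotopic (q.map continuous_snd)) :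
    p.Homotopic q := by
  obtain ⟨H1⟩ := h1
  obtain ⟨H2⟩ := h2
  have hp : p = (p.map continuous_fst).prod (p.map continuous_snd) := by
    apply Path.ext
    funext t
    exact Prod.ext rfl rfl
  have hq : q = (q.map continuous_fst).prod (q.map continuous_snd) := by
    apply Path.ext
    funext t
    exact Prod.ext rfl rfl
  rw [hp, hq]
  exact ⟨Path.Homotopic.prodHomotopy H1 H2⟩

lemma MVevalAt_trans {f₀ f₁ f₂ : C(A, C)} (F : f₀.Homotopy f₁) (G : f₁.Homotopy f₂) (x : A) :
    (F.trans G).evalAt x = (F.evalAt x).trans (G.evalAt x) := by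
  apply Path.ext
  funext t
  show (F.trans G) (t, x) = _
  rw [ContinuousMap.Homotopy.trans_apply, Path.trans_apply]
  split_ifs <;> rfl

/-- The path `t ↦ (f (x₁, uₜ x₂))₁` from `(f x)₁` to `(f (x₁, y¹))₁`. -/
def MVgamma (fCM : C(A × B, C × D)) (y1 : B)
    (u : (ContinuousMap.id B).Homotopy (ContinuousMap.const B y1)) (x : A × B) :
    Path ((fCM x).1) ((fCM (x.1, y1)).1) where
  toFun t := (fCM (x.1, u (t, x.2))).1
  continuous_toFun :=
    continuous_fst.comp (fCM.continuous.comp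
      (continuous_const.prodMk (u.continuous.comp (continuous_id.prodMk continuous_const))))
  source' := by simp
  target' := by simp

/-- The loop `t ↦ (f (x, uₜ y¹))₁` at `(f (x, y¹))₁`. -/
def MVloopMap (fCM : C(A × B, C × D)) (y1 : B)
    (u : (ContinuousMap.id B).Homotopy (ContinuousMap.const B y1)) (x : A) :
    Path ((fCM (x, y1)).1) ((fCM (x, y1)).1) where
  toFun t := (fCM (x, u (t, y1))).1
  continuous_toFun :=
    continuous_fst.comp (fCM.continuous.comp
      (continuous_const.prodMk (u.continuous.comp (continuous_id.prodMk continuous_const))))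
  source' := by simp
  target' := by simp

lemma MVloopMap_homotopic [SimplyConnectedSpace B] (fCM : C(A × B, C × D)) (y1 : B)
    (u : (ContinuousMap.id B).Homotopy (ContinuousMap.const B y1)) (x : A) :
    (MVloopMap fCM y1 u x).Homotopic (Path.refl ((fCM (x, y1)).1)) := by
  let g : C(B, C) := ⟨fun y => (fCM (x, y)).1,
    continuous_fst.comp (fCM.continuous.comp (continuous_const.prodMk continuous_id))⟩
  let lp : Path y1 y1 :=
    { toFun := fun t => u (t, y1)
      continuous_toFun := u.continuous.comp (continuous_id.prodMk continuous_const)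
      source' := by simp
      target' := by simp }
  have h := (SimplyConnectedSpace.paths_homotopic lp (Path.refl y1)).map g
  have e1 : lp.map g.continuous = MVloopMap fCM y1 u x := Path.ext (funext fun t => rfl)
  have e2 : (Path.refl y1).map g.continuous = Path.refl ((fCM (x, y1)).1) :=
    Path.ext (funext fun t => rfl)
  rwa [e1, e2] at h

/-- The projection semi-conjugacy `h = (π⁰ₓ, π¹ₓ)`. -/
def MVh (fCM ιCM : C(A × B, C × D)) (y1 : B)
    (u : (ContinuousMap.id B).Homotopy (ContinuousMap.const B y1)) :
    HSC ιCM fCM (MVsigma ιCM y1) (MVsigma fCM y1) where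
  h0 := ContinuousMap.fst
  h1 := ContinuousMap.fst
  G := { toFun := fun q => (fCM (q.2.1, u (q.1, q.2.2))).1
         continuous_toFun :=
           continuous_fst.comp (fCM.continuous.comp
             ((continuous_fst.comp continuous_snd).prodMk
               (u.continuous.comp (continuous_fst.prodMk (continuous_snd.comp continuous_snd)))))
         map_zero_left := fun p => by simp
         map_one_left := fun p => by simp [MVsigma, MVincl] }
  H := { toFun := fun q => (ιCM (q.2.1, u (q.1, q.2.2))).1
         continuous_toFun :=
           continuous_fst.comp (ιCM.continuous.comp
             ((continuous_fst.comp continuous_snd).prodMk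
               (u.continuous.comp (continuous_fst.prodMk (continuous_snd.comp continuous_snd)))))
         map_zero_left := fun p => by simp
         map_one_left := fun p => by simp [MVsigma, MVincl] }

/-- The inclusion semi-conjugacy `k = (τ⁰, τ¹)`. -/
def MVk (fCM ιCM : C(A × B, C × D)) (y1 : B) (y0 : D)
    (v : (ContinuousMap.id D).Homotopy (ContinuousMap.const D y0)) :
    HSC (MVsigma ιCM y1) (MVsigma fCM y1) ιCM fCM where
  h0 := MVincl y0
  h1 := MVincl y1
  G := ContinuousMap.Homotopy.symm
    { toFun := fun q => ((fCM (q.2, y1)).1, v (q.1, (fCM (q.2, y1)).2))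
      continuous_toFun :=
        (continuous_fst.comp
            (fCM.continuous.comp (continuous_snd.prodMk continuous_const))).prodMk
          (v.continuous.comp (continuous_fst.prodMk (continuous_snd.comp
            (fCM.continuous.comp (continuous_snd.prodMk continuous_const)))))
      map_zero_left := fun x => by simp [MVincl]
      map_one_left := fun x => by simp [MVsigma, MVincl] }
  H := ContinuousMap.Homotopy.symm
    { toFun := fun q => ((ιCM (q.2, y1)).1, v (q.1, (ιCM (q.2, y1)).2))
      continuous_toFun :=
        (continuous_fst.comp
            (ιCM.continuous.comp (continuous_snd.prodMk continuous_const))).prodMk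
          (v.continuous.comp (continuous_fst.prodMk (continuous_snd.comp
            (ιCM.continuous.comp (continuous_snd.prodMk continuous_const)))))
      map_zero_left := fun x => by simp [MVincl]
      map_one_left := fun x => by simp [MVsigma, MVincl] }

/-- The homotopy `(p₁, p₂) ↦ (p₁, u_{1-t} p₂)` from `τ¹ ∘ π¹` to the identity. -/
def MVbigS (y1 : B) (u : (ContinuousMap.id B).Homotopy (ContinuousMap.const B y1)) :
    ((MVincl y1).comp (ContinuousMap.fst : C(A × B, A))).Homotopy
      (ContinuousMap.id (A × B)) where
  toFun q := (q.2.1, u.symm (q.1, q.2.2))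
  continuous_toFun :=
    (continuous_fst.comp continuous_snd).prodMk
      (u.symm.continuous.comp (continuous_fst.prodMk (continuous_snd.comp continuous_snd)))
  map_zero_left p := by simp [MVincl]
  map_one_left p := by simp

/-- The trivial self-homotopy of the identity written as `π ∘ τ`. -/
def MVtriv (b : B) :
    ((ContinuousMap.fst : C(A × B, A)).comp (MVincl b)).Homotopy (ContinuousMap.id A) where
  toFun q := q.2
  continuous_toFun := continuous_snd
  map_zero_left p := rfl
  map_one_left p := rfl

/-- The homotopy `kh ≃ id` of semi-conjugacies of the hyperbolic system. -/
noncomputable def MVkh (fCM ιCM : C(A × B, C × D)) (y1 : B) (y0 : D)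
    (u : (ContinuousMap.id B).Homotopy (ContinuousMap.const B y1))
    (v : (ContinuousMap.id D).Homotopy (ContinuousMap.const D y0))
    [SimplyConnectedSpace D] :
    HSCHomotopy ((MVk fCM ιCM y1 y0 v).comp (MVh fCM ιCM y1 u)) (HSC.ident ιCM fCM) where
  S := MVbigS y1 u
  T := MVbigS y0 v
  cond1 := by
    intro x
    have hG : ((MVk fCM ιCM y1 y0 v).comp (MVh fCM ιCM y1 u)).G
        = ((ContinuousMap.Homotopy.refl (MVk fCM ιCM y1 y0 v).h0).comp (MVh fCM ιCM y1 u).G).trans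
          ((MVk fCM ιCM y1 y0 v).G.compContinuousMap (MVh fCM ιCM y1 u).h1) := rfl
    rw [hG]; erw [MVevalAt_trans]
    refine MVpath_homotopic_of_proj ?_ (SimplyConnectedSpace.paths_homotopic _ _)
    have e1 : (((MVbigS y1 u).evalAt x).map fCM.continuous).map continuous_fst
        = (MVgamma fCM y1 u x).symm := Path.ext (funext fun t => rfl)
    have e2 : (((HSC.ident ιCM fCM).G.evalAt x).map continuous_fst)
        = Path.refl ((fCM x).1) := Path.ext (funext fun t => rfl)
    have e3 : ((((ContinuousMap.Homotopy.refl (MVk fCM ιCM y1 y0 v).h0).comp (MVh fCM ιCM y1 u).G).evalAt x).map continuous_fst)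
        = MVgamma fCM y1 u x := Path.ext (funext fun t => rfl)
    have e4 : ((((MVk fCM ιCM y1 y0 v).G.compContinuousMap
          (MVh fCM ιCM y1 u).h1).evalAt x).map continuous_fst)
        = Path.refl ((fCM (x.1, y1)).1) := Path.ext (funext fun t => rfl)
    have e5 : (((MVbigS y0 v).evalAt (fCM x)).map continuous_fst)
        = Path.refl ((fCM x).1) := Path.ext (funext fun t => rfl)
    erw [Path.map_trans, Path.map_trans, ← Path.map_symm, ← Path.map_symm, Path.map_trans,
      e1, e2, e3, e4]
    refine Path.Homotopic.trans ⟨Path.Homotopy.transRefl _⟩ ?_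
    refine Path.Homotopic.symm (Path.Homotopic.trans ⟨Path.Homotopy.transRefl _⟩ ?_)
    exact ⟨(Path.Homotopy.transRefl (MVgamma fCM y1 u x)).symm₂⟩
  cond2 := by
    intro x
    have hH : ((MVk fCM ιCM y1 y0 v).comp (MVh fCM ιCM y1 u)).H
        = ((ContinuousMap.Homotopy.refl (MVk fCM ιCM y1 y0 v).h0).comp (MVh fCM ιCM y1 u).H).trans
          ((MVk fCM ιCM y1 y0 v).H.compContinuousMap (MVh fCM ιCM y1 u).h1) := rfl
    rw [hH]; erw [MVevalAt_trans]
    refine MVpath_homotopic_of_proj ?_ (SimplyConnectedSpace.paths_homotopic _ _)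
    have a1 : ((((ContinuousMap.Homotopy.refl (MVk fCM ιCM y1 y0 v).h0).comp (MVh fCM ιCM y1 u).H).evalAt x).map continuous_fst)
        = MVgamma ιCM y1 u x := Path.ext (funext fun t => rfl)
    have a2 : ((((MVk fCM ιCM y1 y0 v).H.compContinuousMap
          (MVh fCM ιCM y1 u).h1).evalAt x).map continuous_fst)
        = Path.refl ((ιCM (x.1, y1)).1) := Path.ext (funext fun t => rfl)
    have a3 : (((MVbigS y1 u).evalAt x).map ιCM.continuous).map continuous_fst
        = (MVgamma ιCM y1 u x).symm := Path.ext (funext fun t => rfl)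
    have a4 : (((MVbigS y0 v).evalAt (ιCM x)).map continuous_fst)
        = Path.refl ((ιCM x).1) := Path.ext (funext fun t => rfl)
    have a5 : (((HSC.ident ιCM fCM).H.evalAt x).map continuous_fst)
        = Path.refl ((ιCM x).1) := Path.ext (funext fun t => rfl)
    erw [Path.map_trans, Path.map_trans, Path.map_trans,
      a1, a2, a3, a4]
    refine Path.Homotopic.trans
      (Path.Homotopic.hcomp ⟨Path.Homotopy.transRefl (MVgamma ιCM y1 u x)⟩
        (Path.Homotopic.refl _)) ?_
    refine Path.Homotopic.trans
      (Path.Homotopic.symm ⟨Path.Homotopy.reflTransSymm (MVgamma ιCM y1 u x)⟩) ?_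
    exact Path.Homotopic.symm ⟨Path.Homotopy.transRefl _⟩

/-- The homotopy `hk ≃ id` of semi-conjugacies of the expanding system. -/
noncomputable def MVhk (fCM ιCM : C(A × B, C × D)) (y1 : B) (y0 : D)
    (u : (ContinuousMap.id B).Homotopy (ContinuousMap.const B y1))
    (v : (ContinuousMap.id D).Homotopy (ContinuousMap.const D y0))
    [SimplyConnectedSpace B] :
    HSCHomotopy ((MVh fCM ιCM y1 u).comp (MVk fCM ιCM y1 y0 v))
      (HSC.ident (MVsigma ιCM y1) (MVsigma fCM y1)) where
  S := MVtriv y1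
  T := MVtriv y0
  cond1 := by
    intro x
    have hG : ((MVh fCM ιCM y1 u).comp (MVk fCM ιCM y1 y0 v)).G
        = ((ContinuousMap.Homotopy.refl (MVh fCM ιCM y1 u).h0).comp (MVk fCM ιCM y1 y0 v).G).trans
          ((MVh fCM ιCM y1 u).G.compContinuousMap (MVk fCM ιCM y1 y0 v).h1) := rfl
    rw [hG]; erw [MVevalAt_trans]
    have e1 : ((MVtriv y1).evalAt x).map (MVsigma fCM y1).continuous
        = Path.refl (MVsigma fCM y1 x) := Path.ext (funext fun t => rfl)
    have e2 : (HSC.ident (MVsigma ιCM y1) (MVsigma fCM y1)).G.evalAt x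
        = Path.refl (MVsigma fCM y1 x) := Path.ext (funext fun t => rfl)
    have e3 : ((ContinuousMap.Homotopy.refl (MVh fCM ιCM y1 u).h0).comp (MVk fCM ιCM y1 y0 v).G).evalAt x
        = Path.refl (MVsigma fCM y1 x) := Path.ext (funext fun t => rfl)
    have e4 : ((MVh fCM ιCM y1 u).G.compContinuousMap (MVk fCM ιCM y1 y0 v).h1).evalAt x
        = MVloopMap fCM y1 u x := Path.ext (funext fun t => rfl)
    have e5 : (MVtriv y0).evalAt (MVsigma fCM y1 x)
        = Path.refl (MVsigma fCM y1 x) := Path.ext (funext fun t => rfl)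
    erw [e1, e2, e4]
    refine Path.Homotopic.trans ⟨Path.Homotopy.transRefl _⟩ ?_
    refine Path.Homotopic.symm ?_
    refine Path.Homotopic.trans ⟨Path.Homotopy.transRefl _⟩ ?_
    refine Path.Homotopic.trans ⟨(Path.Homotopy.reflTrans (MVloopMap fCM y1 u x)).symm₂⟩ ?_
    refine Path.Homotopic.trans (MVsymm2 (MVloopMap_homotopic fCM y1 u x)) ?_
    exact Path.Homotopic.refl _
  cond2 := by
    intro x
    have hH : ((MVh fCM ιCM y1 u).comp (MVk fCM ιCM y1 y0 v)).H
        = ((ContinuousMap.Homotopy.refl (MVh fCM ιCM y1 u).h0).comp (MVk fCM ιCM y1 y0 v).H).trans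
          ((MVh fCM ιCM y1 u).H.compContinuousMap (MVk fCM ιCM y1 y0 v).h1) := rfl
    rw [hH]; erw [MVevalAt_trans]
    have a1 : ((ContinuousMap.Homotopy.refl (MVh fCM ιCM y1 u).h0).comp (MVk fCM ιCM y1 y0 v).H).evalAt x
        = Path.refl (MVsigma ιCM y1 x) := Path.ext (funext fun t => rfl)
    have a2 : ((MVh fCM ιCM y1 u).H.compContinuousMap (MVk fCM ιCM y1 y0 v).h1).evalAt x
        = MVloopMap ιCM y1 u x := Path.ext (funext fun t => rfl)
    have a3 : ((MVtriv y1).evalAt x).map (MVsigma ιCM y1).continuous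
        = Path.refl (MVsigma ιCM y1 x) := Path.ext (funext fun t => rfl)
    have a4 : (MVtriv y0).evalAt (MVsigma ιCM y1 x)
        = Path.refl (MVsigma ιCM y1 x) := Path.ext (funext fun t => rfl)
    have a5 : (HSC.ident (MVsigma ιCM y1) (MVsigma fCM y1)).H.evalAt x
        = Path.refl (MVsigma ιCM y1 x) := Path.ext (funext fun t => rfl)
    erw [a1, a2, a3]
    refine Path.Homotopic.trans ⟨Path.Homotopy.transRefl _⟩ ?_
    refine Path.Homotopic.trans ⟨Path.Homotopy.reflTrans (MVloopMap ιCM y1 u x)⟩ ?_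
    refine Path.Homotopic.trans (MVloopMap_homotopic ιCM y1 u x) ?_
    exact Path.Homotopic.symm ⟨Path.Homotopy.transRefl _⟩

end MVAux

/-- A hyperbolic system `𝒳 = (M⁰ₓ × M⁰ᵧ, M¹ₓ × M¹ᵧ; ι, f)` with `M⁰ᵧ` (and `M¹ᵧ`)
contractible is homotopy equivalent to its associated expanding system
`𝒴 = (M⁰ₓ, M¹ₓ; ι_a, σ_a)` (where `σ_a = π⁰ₓ∘f∘τ¹`, `ι_a = π⁰ₓ∘ι∘τ¹` for a basepoint
`y¹ ∈ M¹ᵧ`), via the projections `(π⁰ₓ, π¹ₓ)` in one direction and the inclusions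
`(τ⁰, τ¹)` in the other. -/
theorem hyperbolic_homotopyEquiv_associated_expanding
    {Ex Ey : Type*} [NormedAddCommGroup Ex] [NormedSpace ℝ Ex]
    [NormedAddCommGroup Ey] [NormedSpace ℝ Ey]
    {Hx Hy : Type*} [TopologicalSpace Hx] [TopologicalSpace Hy]
    (Ix : ModelWithCorners ℝ Ex Hx) (Iy : ModelWithCorners ℝ Ey Hy)
    {M0x M0y M1x M1y : Type*} [TopologicalSpace M0x] [ChartedSpace Hx M0x]
    [IsManifold Ix (⊤ : ℕ∞) M0x] [TopologicalSpace M0y] [ChartedSpace Hy M0y]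
    [IsManifold Iy (⊤ : ℕ∞) M0y] [TopologicalSpace M1x] [ChartedSpace Hx M1x]
    [IsManifold Ix (⊤ : ℕ∞) M1x] [TopologicalSpace M1y] [ChartedSpace Hy M1y]
    [IsManifold Iy (⊤ : ℕ∞) M1y]
    [CompactSpace M0x] [CompactSpace M0y] [ConnectedSpace M0x] [ConnectedSpace M0y]
    [SimplyConnectedSpace M0y]
    [ContractibleSpace M0y] [ContractibleSpace M1y]
    (nx : M0x → Ex → ℝ) (ny : M0y → Ey → ℝ)
    (ι f : C(M1x × M1y, M0x × M0y))
    (hι : ContMDiff (Ix.prod Iy) (Ix.prod Iy) (⊤ : ℕ∞) ⇑ι)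
    (hf : ContMDiff (Ix.prod Iy) (Ix.prod Iy) (⊤ : ℕ∞) ⇑f)
    (hιinj : Function.Injective ι) (hfinj : Function.Injective f)
    (d : ℕ) (hproper : IsProperMap (fun p : M1x × M1y => ((f p).1, (ι p).2)))
    (hdeg : ∀ q : M0x × M0y,
      Nat.card {p : M1x × M1y // ((f p).1, (ι p).2) = q} = d)
    (lam : ℝ) (hlam : 1 < lam)
    (hexp : ∀ p : M1x × M1y, ∀ v : Ex × Ey,
      (mfderiv (Ix.prod Iy) (Ix.prod Iy) ι p v : Ex × Ey) ∈ coneH nx ny (ι p) →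
      ((mfderiv (Ix.prod Iy) (Ix.prod Iy) f p v : Ex × Ey) ∈ coneH nx ny (f p) ∧
        lam * nx (ι p).1 ((mfderiv (Ix.prod Iy) (Ix.prod Iy) ι p v : Ex × Ey)).1 ≤
          nx (f p).1 ((mfderiv (Ix.prod Iy) (Ix.prod Iy) f p v : Ex × Ey)).1))
    (hcontr : ∀ p : M1x × M1y, ∀ v : Ex × Ey,
      (mfderiv (Ix.prod Iy) (Ix.prod Iy) f p v : Ex × Ey) ∈ coneV nx ny (f p) →
      ((mfderiv (Ix.prod Iy) (Ix.prod Iy) ι p v : Ex × Ey) ∈ coneV nx ny (ι p) ∧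
        lam * ny (f p).2 ((mfderiv (Ix.prod Iy) (Ix.prod Iy) f p v : Ex × Ey)).2 ≤
          ny (ι p).2 ((mfderiv (Ix.prod Iy) (Ix.prod Iy) ι p v : Ex × Ey)).2))
    (y1pt : M1y) (y0pt : M0y)
    (σa ιa : C(M1x, M0x))
    (hσa : ∀ x : M1x, σa x = (f (x, y1pt)).1) (hιa : ∀ x : M1x, ιa x = (ι (x, y1pt)).1) :
    ∃ (h : HSC ι f ιa σa) (k : HSC ιa σa ι f),
      (∀ p : M0x × M0y, h.h0 p = p.1) ∧ (∀ p : M1x × M1y, h.h1 p = p.1) ∧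
      (∀ x : M0x, k.h0 x = (x, y0pt)) ∧ (∀ x : M1x, k.h1 x = (x, y1pt)) ∧
      Nonempty (HSCHomotopy (k.comp h) (HSC.ident ι f)) ∧
      Nonempty (HSCHomotopy (h.comp k) (HSC.ident ιa σa)) := by
  have hσ : σa = MVsigma f y1pt := ContinuousMap.ext hσa
  have hι2 : ιa = MVsigma ι y1pt := ContinuousMap.ext hιa
  subst hσ hι2
  obtain ⟨u⟩ := MV_exists_contraction M1y y1pt
  obtain ⟨v⟩ := MV_exists_contraction M0y y0pt
  exact ⟨MVh f ι y1pt u, MVk f ι y1pt y0pt v, fun p => rfl, fun p => rfl, fun x => rfl,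
    fun x => rfl, ⟨MVkh f ι y1pt y0pt u v⟩, ⟨MVhk f ι y1pt y0pt u v⟩⟩
end
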